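/- arXiv:1401.0604 — 2 statements merged into one kernel-verified Lean document; each statement's English description precedes it below -/
import Mathlib

section
/- Let $M \geq 1$, let $w : \{1,\dots,N\} \to \mathbb{R}_{>0}$ and $h_s : \{1,\dots,N\} \to \mathbb{R}_{>0}$ for $s = 1,\dots,M$. Define the discrete probability distributions $\pi(k) = w(k)\prod_{s=1}^M h_s(k) / \sum_l w(l)\prod_{s=1}^M h_s(l)$ and, for $1 \leq \ell \leq M$, $\pi^\ell(k) = w(k)\prod_{s=1}^\ell h_s(k) / \sum_l w(l)\prod_{s=1}^\ell h_s(l)$. Suppose there exist constants $A \geq 0$ and $c > 0$ such that $\max_{k,l}(h_s(k)/h_s(l) - 1) \leq A e^{-cs}$ for all $s$. Then the Kullback-Leibler divergence satisfies $\mathrm{KL}(\pi \| \pi^\ell) \leq A \frac{e^{-c(\ell+1)} - e^{-c(M+1)}}{1 - e^{-c}}$. -/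
/-!
Write `u k = w k ∏_{s ≤ ℓ} h_s(k)` and `r k = ∏_{ℓ < s ≤ M} h_s(k)`, so that `π ∝ u r` and
`π^ℓ ∝ u`. The hypothesis together with `1 + x ≤ eˣ` gives `r k ≤ e^B r l` for all `k, l`, where
`B = A ∑_{ℓ < s ≤ M} e^{-cs}`. Hence `π(k) / π^ℓ(k) = r k ∑ u / ∑ u r ≤ e^B`, so every log-ratio
in the divergence is at most `B`, and so is their `π`-average. Summing the geometric series
gives the bound.
-/

open Finset Real

section

variable {ι : Type*} [Fintype ι]

theorem sum_mul_log_div_le_log {p q : ι → ℝ} {C : ℝ} (hp : ∀ k, 0 < p k) (hq : ∀ k, 0 < q k)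
    (hp1 : ∑ k, p k = 1) (hpq : ∀ k, p k / q k ≤ C) :
    ∑ k, p k * log (p k / q k) ≤ log C :=
  calc ∑ k, p k * log (p k / q k)
      ≤ ∑ k, p k * log C := sum_le_sum fun k _ =>
        mul_le_mul_of_nonneg_left (log_le_log (div_pos (hp k) (hq k)) (hpq k)) (hp k).le
    _ = log C := by rw [← sum_mul, hp1, one_mul]

theorem div_sum_mul_div_div_sum_le {u r : ι → ℝ} {C : ℝ} (hu : ∀ k, 0 < u k)
    (hr : ∀ k, 0 < r k) (hC : ∀ k l, r k ≤ C * r l) (k : ι) :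
    (u k * r k / ∑ l, u l * r l) / (u k / ∑ l, u l) ≤ C := by
  have hur : 0 < ∑ l, u l * r l := sum_pos (fun l _ => mul_pos (hu l) (hr l)) ⟨k, mem_univ k⟩
  have hu_sum : 0 < ∑ l, u l := sum_pos (fun l _ => hu l) ⟨k, mem_univ k⟩
  have key : r k * ∑ l, u l ≤ C * ∑ l, u l * r l :=
    calc r k * ∑ l, u l
        = ∑ l, u l * r k := by rw [mul_sum]; exact sum_congr rfl fun l _ => mul_comm _ _
      _ ≤ ∑ l, u l * (C * r l) :=
          sum_le_sum fun l _ => mul_le_mul_of_nonneg_left (hC k l) (hu l).le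
      _ = C * ∑ l, u l * r l := by rw [mul_sum]; exact sum_congr rfl fun l _ => by ring
  have hratio : (u k * r k / ∑ l, u l * r l) / (u k / ∑ l, u l)
      = r k * (∑ l, u l) / ∑ l, u l * r l := by
    field_simp [(hu k).ne', hur.ne', hu_sum.ne']
  rw [hratio, div_le_iff₀ hur]
  exact key

end

theorem prod_le_exp_sum_mul_prod {α : Type*} {S : Finset α} {a b ε : α → ℝ}
    (ha : ∀ s ∈ S, 0 ≤ a s) (hb : ∀ s ∈ S, 0 < b s) (hab : ∀ s ∈ S, a s / b s - 1 ≤ ε s) :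
    ∏ s ∈ S, a s ≤ exp (∑ s ∈ S, ε s) * ∏ s ∈ S, b s := by
  have hfactor : ∀ s ∈ S, a s ≤ exp (ε s) * b s := fun s hs =>
    calc a s ≤ (1 + ε s) * b s := by
          rw [← div_le_iff₀ (hb s hs)]; linarith [hab s hs]
      _ ≤ exp (ε s) * b s :=
          mul_le_mul_of_nonneg_right (by linarith [add_one_le_exp (ε s)]) (hb s hs).le
  calc ∏ s ∈ S, a s ≤ ∏ s ∈ S, exp (ε s) * b s := prod_le_prod ha hfactor
    _ = exp (∑ s ∈ S, ε s) * ∏ s ∈ S, b s := by rw [prod_mul_distrib, exp_sum]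

theorem sum_Ioc_exp_neg_mul {c : ℝ} (hc : c ≠ 0) {m n : ℕ} (hmn : m ≤ n) :
    ∑ s ∈ Ioc m n, exp (-c * s) = (exp (-c * (m + 1)) - exp (-c * (n + 1))) / (1 - exp (-c)) := by
  have hpow : ∀ j : ℕ, exp (-c * j) = exp (-c) ^ j := fun j => by
    rw [← exp_nat_mul, mul_comm]
  have hne : exp (-c) ≠ 1 := by simpa using hc
  rw [← Ico_add_one_add_one_eq_Ioc, sum_congr rfl fun j _ => hpow j,
    geom_sum_Ico hne (by omega), ← neg_div_neg_eq, neg_sub, neg_sub]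
  push_cast [← hpow]
  ring_nf

theorem stmt_0_general (N M ℓ : ℕ) (hN : 1 ≤ N) (hℓM : ℓ ≤ M)
    (w : Fin N → ℝ) (hw : ∀ k, 0 < w k)
    (h : ℕ → Fin N → ℝ) (hh : ∀ s k, 0 < h s k)
    (A c : ℝ) (hc : 0 < c)
    (hbound : ∀ s ∈ Finset.Icc 1 M, ∀ k l : Fin N,
      h s k / h s l - 1 ≤ A * Real.exp (-c * s)) :
    (∑ k : Fin N,
      ((w k * ∏ s ∈ Finset.Icc 1 M, h s k) /
          (∑ l : Fin N, w l * ∏ s ∈ Finset.Icc 1 M, h s l)) *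
        Real.log
          (((w k * ∏ s ∈ Finset.Icc 1 M, h s k) /
              (∑ l : Fin N, w l * ∏ s ∈ Finset.Icc 1 M, h s l)) /
            ((w k * ∏ s ∈ Finset.Icc 1 ℓ, h s k) /
              (∑ l : Fin N, w l * ∏ s ∈ Finset.Icc 1 ℓ, h s l))))
      ≤ A * (Real.exp (-c * (ℓ + 1)) - Real.exp (-c * (M + 1))) / (1 - Real.exp (-c)) := by
  set u : Fin N → ℝ := fun k => w k * ∏ s ∈ Icc 1 ℓ, h s k
  set r : Fin N → ℝ := fun k => ∏ s ∈ Ioc ℓ M, h s k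
  set B := ∑ s ∈ Ioc ℓ M, A * exp (-c * s)
  have hu : ∀ k, 0 < u k := fun k => mul_pos (hw k) (prod_pos fun s _ => hh s k)
  have hr : ∀ k, 0 < r k := fun k => prod_pos fun s _ => hh s k
  have hsplit : ∀ k, w k * ∏ s ∈ Icc 1 M, h s k = u k * r k := fun k => by
    have hIcc : ∀ m, Icc 1 m = Ioc 0 m := fun m => Icc_add_one_left_eq_Ioc 0 m
    rw [mul_assoc, hIcc, hIcc, ← prod_Ioc_consecutive _ (Nat.zero_le ℓ) hℓM]
  have hr_le : ∀ k l, r k ≤ exp B * r l := fun k l =>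
    prod_le_exp_sum_mul_prod (fun s _ => (hh s k).le) (fun s _ => hh s l) fun s hs =>
      hbound s (by rw [mem_Ioc] at hs; rw [mem_Icc]; omega) k l
  have hZ : 0 < ∑ l, u l * r l := sum_pos (fun l _ => mul_pos (hu l) (hr l)) ⟨⟨0, hN⟩, mem_univ _⟩
  have hZℓ : 0 < ∑ l, u l := sum_pos (fun l _ => hu l) ⟨⟨0, hN⟩, mem_univ _⟩
  simp_rw [hsplit]
  calc _ ≤ log (exp B) :=
        sum_mul_log_div_le_log (fun k => div_pos (mul_pos (hu k) (hr k)) hZ)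
          (fun k => div_pos (hu k) hZℓ) (by rw [← sum_div, div_self hZ.ne'])
          (div_sum_mul_div_div_sum_le hu hr hr_le)
    _ = _ := by rw [log_exp, mul_div_assoc, ← sum_Ioc_exp_neg_mul hc.ne' hℓM, mul_sum]

theorem stmt_0 (N M ℓ : ℕ) (hN : 1 ≤ N) (hM : 1 ≤ M) (hℓ1 : 1 ≤ ℓ) (hℓM : ℓ ≤ M)
    (w : Fin N → ℝ) (hw : ∀ k, 0 < w k)
    (h : ℕ → Fin N → ℝ) (hh : ∀ s k, 0 < h s k)
    (A c : ℝ) (hA : 0 ≤ A) (hc : 0 < c)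
    (hbound : ∀ s ∈ Finset.Icc 1 M, ∀ k l : Fin N,
      h s k / h s l - 1 ≤ A * Real.exp (-c * s)) :
    (∑ k : Fin N,
      ((w k * ∏ s ∈ Finset.Icc 1 M, h s k) /
          (∑ l : Fin N, w l * ∏ s ∈ Finset.Icc 1 M, h s l)) *
        Real.log
          (((w k * ∏ s ∈ Finset.Icc 1 M, h s k) /
              (∑ l : Fin N, w l * ∏ s ∈ Finset.Icc 1 M, h s l)) /
            ((w k * ∏ s ∈ Finset.Icc 1 ℓ, h s k) /
              (∑ l : Fin N, w l * ∏ s ∈ Finset.Icc 1 ℓ, h s l))))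
      ≤ A * (Real.exp (-c * (ℓ + 1)) - Real.exp (-c * (M + 1))) / (1 - Real.exp (-c)) :=
  stmt_0_general N M ℓ hN hℓM w hw h hh A c hc hbound
end

section
/- Let $\pi$ be a probability density on $\mathcal{X}^T$ and let $\phi$ be a probability density on an extended space $\Omega = \mathcal{X}^{NT} \times \{1,\dots,N\}^T$ of the form $\phi(\mathbf{x}_{1:T}, b_{1:T}) = \frac{\pi(x_{1:T}^{b_{1:T}})}{N^T} \, \phi_c(\mathbf{x}^{-b}_{1:T} \mid x^{b_{1:T}}_{1:T}, b_{1:T})$, where $\phi_c(\cdot \mid \cdot)$ is a conditional probability density of the remaining coordinates. Then, under $\phi$, the marginal distribution of the extracted trajectory $x_{1:T}^{b_{1:T}} = (x_1^{b_1}, \dots, x_T^{b_T})$ is exactly $\pi$. -/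
open MeasureTheory Finset
open scoped ENNReal

/-! For a fixed index sequence `b`, splitting the particle array `x` into the selected trajectory
`x^{b}` and the remaining coordinates `x^{-b}` is a measure-preserving rearrangement of the
product measure. By Tonelli, the `b`-term of the left-hand side is therefore the integral of
`g π / N^T` in `x^{b}` times the integral of `φc` in `x^{-b}`, which is `1`; the `N^T` terms
are all equal and add up to `∫ g π`. -/

section InsertAt

variable {ι : Type*} {κ : ι → Type*} [∀ t, DecidableEq (κ t)] {X : ι → Type*}

/-- Rebuilds the particle array `x` from `x^{b}` and `x^{-b}`. -/
def insertAt (b : ∀ t, κ t) (p : (∀ t, X t) × ∀ t, {i // i ≠ b t} → X t) :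
    ∀ t, κ t → X t :=
  fun t i => if h : i = b t then p.1 t else p.2 t ⟨i, h⟩

@[simp]
lemma insertAt_apply_self (b : ∀ t, κ t) (p : (∀ t, X t) × ∀ t, {i // i ≠ b t} → X t)
    (t : ι) : insertAt b p t (b t) = p.1 t := by
  simp [insertAt]

lemma insertAt_preimage_pi (b : ∀ t, κ t) (s : ∀ t, κ t → Set (X t)) :
    insertAt (X := X) b ⁻¹' (Set.univ.pi fun t => Set.univ.pi (s t)) =
      (Set.univ.pi fun t => s t (b t)) ×ˢ
        Set.univ.pi fun t => Set.univ.pi fun i : {i // i ≠ b t} => s t i := by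
  ext p
  simp only [Set.mem_preimage, Set.mem_pi, Set.mem_univ, true_implies, Set.mem_prod]
  refine ⟨fun h => ⟨fun t => by simpa using h t (b t),
    fun t i => by simpa [insertAt, i.2] using h t i⟩, fun h t i => ?_⟩
  by_cases hi : i = b t
  · subst hi; simpa using h.1 t
  · simpa [insertAt, hi] using h.2 t ⟨i, hi⟩

variable [∀ t, MeasurableSpace (X t)]

@[fun_prop]
lemma measurable_insertAt (b : ∀ t, κ t) : Measurable (insertAt (X := X) b) := by
  refine measurable_pi_lambda _ fun t => measurable_pi_lambda _ fun i => ?_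
  by_cases h : i = b t
  · simp only [insertAt, h, dite_true]; fun_prop
  · simp only [insertAt, h, dite_false]; fun_prop

variable [Fintype ι] [∀ t, Fintype (κ t)]

lemma measurePreserving_insertAt (μ : ∀ t, Measure (X t)) [∀ t, SigmaFinite (μ t)]
    (b : ∀ t, κ t) :
    MeasurePreserving (insertAt b)
      ((Measure.pi μ).prod (Measure.pi fun t => Measure.pi fun _ : {i // i ≠ b t} => μ t))
      (Measure.pi fun t => Measure.pi fun _ : κ t => μ t) := by
  refine ⟨measurable_insertAt b, (Measure.pi_eq_generateFrom (fun _ => generateFrom_pi)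
    (fun _ => isPiSystem_pi)
    (fun t => Measure.FiniteSpanningSetsIn.pi fun _ => (μ t).toFiniteSpanningSetsIn) ?_).symm⟩
  rintro s hs
  choose v hv hsv using hs
  obtain rfl : s = fun t => Set.univ.pi (v t) := funext fun t => (hsv t).symm
  have hs : MeasurableSet (Set.univ.pi fun t => Set.univ.pi (v t)) :=
    .univ_pi fun t => .univ_pi fun i => hv t i (Set.mem_univ i)
  rw [Measure.map_apply (measurable_insertAt b) hs, insertAt_preimage_pi, Measure.prod_prod]
  simp only [Measure.pi_pi, ← Finset.prod_mul_distrib]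
  exact Finset.prod_congr rfl fun t _ =>
    (Fintype.prod_eq_mul_prod_subtype_ne (fun i => μ t (v t i)) (b t)).symm

lemma lintegral_mul_eq_lintegral_insertAt (μ : ∀ t, Measure (X t)) [∀ t, SigmaFinite (μ t)]
    (b : ∀ t, κ t) {F : (∀ t, X t) → ℝ≥0∞} {G : (∀ t, κ t → X t) → ℝ≥0∞}
    (hF : Measurable F) (hG : Measurable G) :
    ∫⁻ x, F (fun t => x t (b t)) * G x ∂(Measure.pi fun t => Measure.pi fun _ : κ t => μ t) =
      ∫⁻ z, F z * ∫⁻ u, G (insertAt b (z, u))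
        ∂(Measure.pi fun t => Measure.pi fun _ : {i // i ≠ b t} => μ t) ∂(Measure.pi μ) := by
  rw [← (measurePreserving_insertAt μ b).lintegral_comp (by fun_prop),
    lintegral_prod _ (by fun_prop)]
  simp only [insertAt_apply_self]
  exact lintegral_congr fun z => lintegral_const_mul _ (by fun_prop)

end InsertAt

theorem stmt_17_general {X : Type*} [MeasurableSpace X] (m : Measure X) [SigmaFinite m]
    (N T : ℕ) (hN : 1 ≤ N)
    (π : (Fin T → X) → ℝ≥0∞) (hπmeas : Measurable π)
    (φc : (Fin T → Fin N → X) → (Fin T → Fin N) → ℝ≥0∞)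
    (hφcmeas : ∀ b, Measurable (fun x => φc x b))
    -- `φc (· | x^{b}, b)` is a conditional probability density of the remaining
    -- particle coordinates, given the extracted trajectory `z` and the indices `b`
    (hφc : ∀ (b : Fin T → Fin N) (z : Fin T → X),
      ∫⁻ u : ∀ t : Fin T, {i : Fin N // i ≠ b t} → X,
          φc (fun t i => if h : i = b t then z t else u t ⟨i, h⟩) b
        ∂(Measure.pi fun t : Fin T =>
            Measure.pi fun _ : {i : Fin N // i ≠ b t} => m) = 1)
    (g : (Fin T → X) → ℝ≥0∞) (hg : Measurable g) :
    ∑ b : Fin T → Fin N,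
      ∫⁻ x,
          g (fun t => x t (b t)) *
            (π (fun t => x t (b t)) / (N : ℝ≥0∞) ^ T * φc x b)
        ∂(Measure.pi fun _ : Fin T => Measure.pi fun _ : Fin N => m)
      = ∫⁻ z, g z * π z ∂(Measure.pi fun _ : Fin T => m) := by
  replace hφc (b : Fin T → Fin N) (z : Fin T → X) :
      ∫⁻ u, φc (insertAt b (z, u)) b
        ∂(Measure.pi fun t => Measure.pi fun _ : {i // i ≠ b t} => m) = 1 := hφc b z
  set c : ℝ≥0∞ := (N : ℝ≥0∞) ^ T
  have hc0 : c ≠ 0 := pow_ne_zero _ (by exact_mod_cast Nat.one_le_iff_ne_zero.mp hN)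
  have hc : c ≠ ∞ := ENNReal.pow_ne_top (ENNReal.natCast_ne_top N)
  have hterm (b : Fin T → Fin N) :
      ∫⁻ x, g (fun t => x t (b t)) * (π (fun t => x t (b t)) / c * φc x b)
        ∂(Measure.pi fun _ : Fin T => Measure.pi fun _ : Fin N => m)
      = (∫⁻ z, g z * π z ∂(Measure.pi fun _ : Fin T => m)) * c⁻¹ := by
    simp only [div_eq_mul_inv, ← mul_assoc]
    rw [lintegral_mul_eq_lintegral_insertAt (F := fun z => g z * π z * c⁻¹) (fun _ => m) b
      (by fun_prop) (hφcmeas b)]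
    simp only [hφc, mul_one]
    exact lintegral_mul_const _ (by fun_prop)
  rw [sum_congr rfl fun b _ => hterm b, sum_const, card_univ, Fintype.card_fun,
    Fintype.card_fin, Fintype.card_fin, nsmul_eq_mul, Nat.cast_pow, mul_left_comm,
    ENNReal.mul_inv_cancel hc0 hc, mul_one]

theorem stmt_17 {X : Type*} [MeasurableSpace X] (m : Measure X) [SigmaFinite m]
    (N T : ℕ) (hN : 1 ≤ N)
    (π : (Fin T → X) → ℝ≥0∞) (hπmeas : Measurable π)
    (hπ : ∫⁻ z, π z ∂(Measure.pi fun _ : Fin T => m) = 1)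
    (φc : (Fin T → Fin N → X) → (Fin T → Fin N) → ℝ≥0∞)
    (hφcmeas : ∀ b, Measurable (fun x => φc x b))
    -- `φc (· | x^{b}, b)` is a conditional probability density of the remaining
    -- particle coordinates, given the extracted trajectory `z` and the indices `b`
    (hφc : ∀ (b : Fin T → Fin N) (z : Fin T → X),
      ∫⁻ u : ∀ t : Fin T, {i : Fin N // i ≠ b t} → X,
          φc (fun t i => if h : i = b t then z t else u t ⟨i, h⟩) b
        ∂(Measure.pi fun t : Fin T =>
            Measure.pi fun _ : {i : Fin N // i ≠ b t} => m) = 1)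
    (g : (Fin T → X) → ℝ≥0∞) (hg : Measurable g) :
    ∑ b : Fin T → Fin N,
      ∫⁻ x,
          g (fun t => x t (b t)) *
            (π (fun t => x t (b t)) / (N : ℝ≥0∞) ^ T * φc x b)
        ∂(Measure.pi fun _ : Fin T => Measure.pi fun _ : Fin N => m)
      = ∫⁻ z, g z * π z ∂(Measure.pi fun _ : Fin T => m) :=
  stmt_17_general m N T hN π hπmeas φc hφcmeas hφc g hg
end
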